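/- L^∘ is sound with respect to the formal language semantics: let Σ be an alphabet and let w assign to each primitive type a language over Σ (a set of finite words in Σ*); extend w to all types by w(B\A) = {u ∈ Σ* : for all v ∈ w(B), vu ∈ w(A)}, w(A/B) = {u ∈ Σ* : for all v ∈ w(B), uv ∈ w(A)}, w(A·B) = {uv : u ∈ w(A), v ∈ w(B)}, and w(A^∘) = {vu : uv ∈ w(A)}. Then for every sequent A1,…,An → B derivable in L^∘, the inclusion w(A1)·…·w(An) ⊆ w(B) holds (where · on languages is elementwise concatenation). -/

import Mathlib

/-- Types of the Lambek calculus with the cyclic shift `L^∘`, built from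
primitive types `P` by `\` (`ldiv A B = A \ B`), `/` (`rdiv B A = B / A`),
`·` (`mul`) and the cyclic shift `^∘` (`circ`). -/
inductive Fm (P : Type) : Type
  | prim : P → Fm P
  | ldiv : Fm P → Fm P → Fm P
  | rdiv : Fm P → Fm P → Fm P
  | mul  : Fm P → Fm P → Fm P
  | circ : Fm P → Fm P
deriving DecidableEq

open Fm

/-- Derivability of sequents in the Lambek calculus with the cyclic shift `L^∘`.
The Boolean flag indicates whether the rule (cut) may be used:
`Dv P true` is `L^∘` (with cut), `Dv P false` is its cut-free part. -/
inductive Dv (P : Type) : Bool → List (Fm P) → Fm P → Prop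
  | ax (c : Bool) (A : Fm P) :
      Dv P c [A] A
  | ldivL (c : Bool) (Γ Δ Pi : List (Fm P)) (A B C : Fm P) :
      Dv P c (Γ ++ B :: Δ) C → Dv P c Pi A → Pi ≠ [] →
      Dv P c (Γ ++ Pi ++ ldiv A B :: Δ) C
  | ldivR (c : Bool) (Pi : List (Fm P)) (A B : Fm P) :
      Dv P c (A :: Pi) B → Pi ≠ [] →
      Dv P c Pi (ldiv A B)
  | rdivL (c : Bool) (Γ Δ Pi : List (Fm P)) (A B C : Fm P) :
      Dv P c (Γ ++ B :: Δ) C → Dv P c Pi A → Pi ≠ [] →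
      Dv P c (Γ ++ rdiv B A :: (Pi ++ Δ)) C
  | rdivR (c : Bool) (Pi : List (Fm P)) (A B : Fm P) :
      Dv P c (Pi ++ [A]) B → Pi ≠ [] →
      Dv P c Pi (rdiv B A)
  | mulL (c : Bool) (Γ Δ : List (Fm P)) (A B C : Fm P) :
      Dv P c (Γ ++ A :: B :: Δ) C →
      Dv P c (Γ ++ mul A B :: Δ) C
  | mulR (c : Bool) (Pi Psi : List (Fm P)) (A B : Fm P) :
      Dv P c Pi A → Dv P c Psi B → Pi ≠ [] → Psi ≠ [] →
      Dv P c (Pi ++ Psi) (mul A B)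
  | circR (c : Bool) (Pi : List (Fm P)) (A : Fm P) :
      Dv P c Pi A →
      Dv P c Pi (circ A)
  | circL (c : Bool) (A B : Fm P) :
      Dv P c [B] (circ A) →
      Dv P c [circ B] (circ A)
  | circC (c : Bool) (Pi Psi : List (Fm P)) (A : Fm P) :
      Dv P c (Pi ++ Psi) (circ A) → Pi ≠ [] → Psi ≠ [] →
      Dv P c (Psi ++ Pi) (circ A)
  | cut (Γ Δ Pi : List (Fm P)) (A B : Fm P) :
      Dv P true Pi A → Dv P true (Γ ++ A :: Δ) B → Pi ≠ [] →
      Dv P true (Γ ++ Pi ++ Δ) B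

/-- The formal language interpretation of types, extending an assignment `w`
of languages to primitive types.  Recall `ldiv A B = A \ B` and
`rdiv B A = B / A`. -/
def interp {P α : Type} (w : P → Language α) : Fm P → Language α
  | Fm.prim p => w p
  | Fm.ldiv A B => { u | ∀ v ∈ interp w A, v ++ u ∈ interp w B }
  | Fm.rdiv B A => { u | ∀ v ∈ interp w A, u ++ v ∈ interp w B }
  | Fm.mul A B => interp w A * interp w B
  | Fm.circ A => { x | ∃ u v, u ++ v ∈ interp w A ∧ x = v ++ u }

/-! The division connectives are interpreted by residuals of language multiplication and `^∘` by
the closure under one cyclic shift. Each rule of `L^∘` is then an instance of residuation,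
monotonicity of multiplication, or the fact that a cyclically shifted language is closed under
further shifts. -/

namespace Language

variable {α : Type*}

def leftResidual (L M : Language α) : Language α := {u | ∀ v ∈ L, v ++ u ∈ M}

def rightResidual (M L : Language α) : Language α := {u | ∀ v ∈ L, u ++ v ∈ M}

def cyclicShift (L : Language α) : Language α := {x | ∃ u v, u ++ v ∈ L ∧ x = v ++ u}

variable {L M N : Language α}

theorem mul_le_iff_le_leftResidual : L * N ≤ M ↔ N ≤ L.leftResidual M := by
  constructor
  · intro h u hu v hv
    exact h (append_mem_mul hv hu)
  · intro h x hx
    obtain ⟨v, hv, u, hu, rfl⟩ := mem_mul.1 hx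
    exact h hu v hv

theorem mul_le_iff_le_rightResidual : N * L ≤ M ↔ N ≤ M.rightResidual L := by
  constructor
  · intro h u hu v hv
    exact h (append_mem_mul hu hv)
  · intro h x hx
    obtain ⟨u, hu, v, hv, rfl⟩ := mem_mul.1 hx
    exact h hu v hv

theorem mul_leftResidual_le : L * L.leftResidual M ≤ M :=
  mul_le_iff_le_leftResidual.2 le_rfl

theorem rightResidual_mul_le : M.rightResidual L * L ≤ M :=
  mul_le_iff_le_rightResidual.2 le_rfl

theorem le_cyclicShift : L ≤ L.cyclicShift :=
  fun x hx => ⟨[], x, hx, (List.append_nil x).symm⟩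

theorem cyclicShift_mono : Monotone (cyclicShift : Language α → Language α) :=
  fun _ _ hLM _ ⟨u, v, huv, hx⟩ => ⟨u, v, hLM huv, hx⟩

theorem append_mem_cyclicShift_comm {u v : List α} (h : u ++ v ∈ L.cyclicShift) :
    v ++ u ∈ L.cyclicShift := by
  obtain ⟨p, q, hpq, hqp⟩ := h
  rcases List.append_eq_append_iff.1 hqp.symm with ⟨r, rfl, rfl⟩ | ⟨r, rfl, rfl⟩
  · exact ⟨r, v ++ q, by simpa using hpq, by simp⟩
  · exact ⟨p ++ u, r, by simpa using hpq, by simp⟩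

theorem cyclicShift_cyclicShift_le : L.cyclicShift.cyclicShift ≤ L.cyclicShift := by
  rintro _ ⟨u, v, huv, rfl⟩
  exact append_mem_cyclicShift_comm huv

theorem mul_le_cyclicShift_comm (h : L * M ≤ N.cyclicShift) : M * L ≤ N.cyclicShift := by
  intro x hx
  obtain ⟨v, hv, u, hu, rfl⟩ := mem_mul.1 hx
  exact append_mem_cyclicShift_comm (h (append_mem_mul hu hv))

end Language

section Semantics

variable {P α : Type} (w : P → Language α) (A B : Fm P)

theorem interp_ldiv : interp w (ldiv A B) = (interp w A).leftResidual (interp w B) := rfl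

theorem interp_rdiv : interp w (rdiv B A) = (interp w B).rightResidual (interp w A) := rfl

theorem interp_mul : interp w (mul A B) = interp w A * interp w B := rfl

theorem interp_circ : interp w (circ A) = (interp w A).cyclicShift := rfl

end Semantics

open Language in
theorem Dv.prod_interp_le {P α : Type} (w : P → Language α) {c : Bool} {Γ : List (Fm P)}
    {B : Fm P} (h : Dv P c Γ B) : (Γ.map (interp w)).prod ≤ interp w B := by
  induction h with
  | ax => simp
  | ldivL _ _ _ Pi A B _ _ _ _ ihB ihA =>
    simp only [List.map_append, List.map_cons, List.prod_append, List.prod_cons] at ihB ⊢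
    refine le_trans ?_ ihB
    rw [mul_assoc, ← mul_assoc (Pi.map (interp w)).prod, interp_ldiv]
    gcongr
    exact (mul_le_mul_left ihA _).trans mul_leftResidual_le
  | ldivR _ _ _ _ _ _ ih =>
    rw [interp_ldiv, ← mul_le_iff_le_leftResidual]
    simpa using ih
  | rdivL _ _ _ _ A B _ _ _ _ ihB ihA =>
    simp only [List.map_append, List.map_cons, List.prod_append, List.prod_cons] at ihB ⊢
    refine le_trans ?_ ihB
    rw [← mul_assoc (interp w _), interp_rdiv]
    gcongr
    exact (mul_le_mul_right ihA _).trans rightResidual_mul_le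
  | rdivR _ _ _ _ _ _ ih =>
    rw [interp_rdiv, ← mul_le_iff_le_rightResidual]
    simpa using ih
  | mulL _ _ _ _ _ _ _ ih =>
    simpa [interp_mul, mul_assoc] using ih
  | mulR _ _ _ _ _ _ _ _ _ ihA ihB =>
    rw [List.map_append, List.prod_append, interp_mul]
    exact mul_le_mul' ihA ihB
  | circR _ _ _ _ ih =>
    rw [interp_circ]
    exact ih.trans le_cyclicShift
  | circL _ _ _ _ ih =>
    simp only [List.map_cons, List.map_nil, List.prod_cons, List.prod_nil, mul_one,
      interp_circ] at ih ⊢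
    exact (cyclicShift_mono ih).trans cyclicShift_cyclicShift_le
  | circC _ _ _ _ _ _ _ ih =>
    rw [List.map_append, List.prod_append, interp_circ] at ih ⊢
    exact mul_le_cyclicShift_comm ih
  | cut _ _ _ _ _ _ _ _ ihA ihB =>
    simp only [List.map_append, List.map_cons, List.prod_append, List.prod_cons] at ihB ⊢
    refine le_trans ?_ ihB
    rw [mul_assoc]
    gcongr

/-- Soundness of `L^∘` with respect to the formal language semantics: if
`A1,…,An → B` is derivable in `L^∘`, then `w(A1)·…·w(An) ⊆ w(B)` for every
interpretation `w` of the primitive types as languages. -/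
theorem Lcirc_sound (P α : Type) (w : P → Language α) (Γ : List (Fm P)) (B : Fm P)
    (h : Dv P true Γ B) : (Γ.map (interp w)).prod ≤ interp w B :=
  h.prod_interp_le w
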